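/- Let a, b > 0 and v ∈ (0, 1) with 1/2 < v < 1. Then ((1 − v)a + v·b)² ≤ v²(a − b)² − r₁(√(ab) − a)² + K(√h, 2)^{−r̂₁} · (a^{1−v} b^{v})², where h = b/a, r = min{v, 1 − v}, r₁ = min{2r, 1 − 2r} and r̂₁ = min{2r₁, 1 − 2r₁}. -/

import Mathlib

/-!
Write `b = a s²`. Since `((1 - v) a + v b)² - v² (a - b)² = a² ((2 - ν) s² - (1 - ν))` with
`ν = 2 (1 - v)`, and `r₁ = min ν (1 - ν)`, the claim is a reverse Young inequality for the
exponent `2 - ν > 1`. It follows from the Kantorovich refinement of Young's inequality with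
weight `ν` (Liao–Wu), `K(s)^{r̂₁} s^{2ν} + r₁ (s - 1)² ≤ A := (1 - ν) + ν s²`: the left side
`B` of the claim satisfies `A + B = 2 s²`, hence `A B ≤ s⁴`, and dividing by
`K(s)^{r̂₁} s^{2ν} ≤ A` gives `B ≤ K(s)^{-r̂₁} s^{4 - 2ν}`. The Liao–Wu inequality reduces to
the Zuo–Shi–Fujii one, `K(x)^{min μ (1-μ)} x^μ ≤ (1 - μ) + μ x`, after removing `r₁ (s - 1)²`,
and that one is weighted AM-GM applied to `1` or `x` together with `(x + 1)/2`, using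
`((x + 1)/2)² = K(x) x`.
-/

/-- The Kantorovich constant `K(t, 2) = (t + 1)^2 / (4 t)`. -/
noncomputable def Kant (t : ℝ) : ℝ := (t + 1) ^ 2 / (4 * t)

lemma Kant_mul_self {t : ℝ} (ht : t ≠ 0) : Kant t * t = ((t + 1) / 2) ^ 2 := by
  rw [Kant]
  field_simp
  ring

lemma Kant_pos {t : ℝ} (ht : 0 < t) : 0 < Kant t := by
  unfold Kant
  positivity

lemma Kant_rpow_mul_rpow_self {x : ℝ} (hx : 0 < x) (θ : ℝ) :
    Kant x ^ θ * x ^ θ = ((x + 1) / 2) ^ (2 * θ) := by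
  rw [← Real.mul_rpow (Kant_pos hx).le hx.le, Kant_mul_self hx.ne', ← Real.rpow_two,
    ← Real.rpow_mul (by positivity)]

lemma Kant_rpow_mul_rpow_le {x μ : ℝ} (hx : 0 < x) (hμ0 : 0 ≤ μ) (hμ1 : μ ≤ 1) :
    Kant x ^ min μ (1 - μ) * x ^ μ ≤ (1 - μ) + μ * x := by
  have hm : 0 ≤ (x + 1) / 2 := by positivity
  rcases le_total μ (1 / 2) with hμ | hμ
  · rw [min_eq_left (by linarith), Kant_rpow_mul_rpow_self hx]
    have := Real.geom_mean_le_arith_mean2_weighted (by linarith) (by linarith) zero_le_one hm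
      (show 1 - 2 * μ + 2 * μ = 1 by ring)
    rw [Real.one_rpow, one_mul] at this
    linarith
  · have hsplit : x ^ μ = x ^ (1 - μ) * x ^ (2 * μ - 1) := by
      rw [← Real.rpow_add hx]
      ring_nf
    rw [min_eq_right (by linarith), hsplit, ← mul_assoc, Kant_rpow_mul_rpow_self hx]
    have := Real.geom_mean_le_arith_mean2_weighted (by linarith) (by linarith) hm hx.le
      (show 2 * (1 - μ) + (2 * μ - 1) = 1 by ring)
    linarith

lemma Kant_rpow_mul_rpow_add_sq_le {s ν : ℝ} (hs : 0 < s) (hν0 : 0 ≤ ν) (hν1 : ν ≤ 1) :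
    Kant s ^ min (2 * min ν (1 - ν)) (1 - 2 * min ν (1 - ν)) * s ^ (2 * ν)
        + min ν (1 - ν) * (s - 1) ^ 2 ≤ (1 - ν) + ν * s ^ 2 := by
  -- Removing `r (s - 1)²` from the right side leaves `(1 - 2ν) + 2ν s` if `ν ≤ 1/2`,
  -- and `s ((2 - 2ν) + (2ν - 1) s)` otherwise.
  rcases le_total ν (1 / 2) with hν | hν
  · rw [show min ν (1 - ν) = ν from min_eq_left (by linarith)]
    have := Kant_rpow_mul_rpow_le hs (by linarith : 0 ≤ 2 * ν) (by linarith)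
    nlinarith
  · have hexp : min (2 * (1 - ν)) (1 - 2 * (1 - ν)) = min (2 * ν - 1) (1 - (2 * ν - 1)) := by
      rw [min_comm]
      ring_nf
    have hsplit : s ^ (2 * ν) = s * s ^ (2 * ν - 1) := by
      rw [← Real.rpow_one_add' hs.le (by linarith)]
      ring_nf
    rw [show min ν (1 - ν) = 1 - ν from min_eq_right (by linarith), hexp, hsplit]
    have := mul_le_mul_of_nonneg_left
      (Kant_rpow_mul_rpow_le hs (by linarith : 0 ≤ 2 * ν - 1) (by linarith)) hs.le
    nlinarith

lemma sub_add_sq_le_Kant_rpow_neg_mul_rpow {s ν : ℝ} (hs : 0 < s) (hν0 : 0 ≤ ν) (hν1 : ν ≤ 1) :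
    (2 - ν) * s ^ 2 - (1 - ν) + min ν (1 - ν) * (s - 1) ^ 2 ≤
      Kant s ^ (-min (2 * min ν (1 - ν)) (1 - 2 * min ν (1 - ν))) * s ^ (4 - 2 * ν) := by
  set ρ := min (2 * min ν (1 - ν)) (1 - 2 * min ν (1 - ν))
  set A := (1 - ν) + ν * s ^ 2 - min ν (1 - ν) * (s - 1) ^ 2
  set B := (2 - ν) * s ^ 2 - (1 - ν) + min ν (1 - ν) * (s - 1) ^ 2
  have hk : 0 < Kant s ^ ρ := Real.rpow_pos_of_pos (Kant_pos hs) ρ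
  have hQ : 0 < s ^ (2 * ν) := Real.rpow_pos_of_pos hs _
  have hPQ : s ^ (4 - 2 * ν) * s ^ (2 * ν) = s ^ 4 := by
    rw [← Real.rpow_add hs]
    norm_num
  have hA : Kant s ^ ρ * s ^ (2 * ν) ≤ A := by
    have := Kant_rpow_mul_rpow_add_sq_le hs hν0 hν1
    linarith
  have hAB : A * B ≤ s ^ 4 := by
    nlinarith [sq_nonneg (A - B)]
  rw [Real.rpow_neg (Kant_pos hs).le, inv_mul_eq_div, le_div_iff₀ hk]
  rcases le_total B 0 with hB | hB
  · nlinarith [Real.rpow_pos_of_pos hs (4 - 2 * ν)]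
  · refine le_of_mul_le_mul_right ?_ hQ
    rw [hPQ]
    nlinarith [mul_le_mul_of_nonneg_right hA hB]

theorem stmt_9 (a b v : ℝ) (ha : 0 < a) (hb : 0 < b) (hv0 : 1 / 2 < v) (hv : v < 1)
    (h r r1 rh1 : ℝ) (hh : h = b / a) (hr : r = min v (1 - v))
    (hr1 : r1 = min (2 * r) (1 - 2 * r)) (hrh1 : rh1 = min (2 * r1) (1 - 2 * r1)) :
    ((1 - v) * a + v * b) ^ 2 ≤
      v ^ 2 * (a - b) ^ 2 - r1 * (Real.sqrt (a * b) - a) ^ 2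
        + Kant (Real.sqrt h) ^ (-rh1) * (a ^ (1 - v) * b ^ v) ^ 2 := by
  subst hh hr hr1 hrh1
  rw [show min v (1 - v) = 1 - v from min_eq_right (by linarith)]
  set s := Real.sqrt (b / a)
  have hs : 0 < s := Real.sqrt_pos.mpr (div_pos hb ha)
  have hb_eq : b = a * s ^ 2 := by
    rw [Real.sq_sqrt (div_pos hb ha).le]
    field_simp
  have hsqrt : Real.sqrt (a * b) = a * s := by
    rw [hb_eq, show a * (a * s ^ 2) = (a * s) ^ 2 by ring, Real.sqrt_sq (by positivity)]
  have hgeom : (a ^ (1 - v) * b ^ v) ^ 2 = a ^ 2 * s ^ (4 - 2 * (2 * (1 - v))) := by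
    have hsv : (s ^ 2) ^ v = s ^ (2 * v) := by
      rw [← Real.rpow_two, ← Real.rpow_mul hs.le]
    have hav : a ^ (1 - v) * a ^ v = a := by
      rw [← Real.rpow_add ha]
      norm_num
    rw [hb_eq, Real.mul_rpow ha.le (sq_nonneg s), hsv, ← mul_assoc, hav, mul_pow,
      ← Real.rpow_mul_natCast hs.le]
    ring_nf
  have key := sub_add_sq_le_Kant_rpow_neg_mul_rpow hs
    (by linarith : 0 ≤ 2 * (1 - v)) (by linarith : 2 * (1 - v) ≤ 1)
  rw [hsqrt, hgeom, hb_eq]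
  nlinarith [mul_le_mul_of_nonneg_left key (sq_nonneg a)]
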